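/- The function L(p) = (1/((1 − 2pq)√(pq))) · (c₁/p + c₂ + c₃ · (1 − 2p)(1 + 2pq)/(1 − 2pq)), where q = 1 − p, c₁ = 0.516, c₂ = 0.121, c₃ = 0.271, is strictly decreasing on the interval (0, 0.5]. -/

import Mathlib

/-!
With `q = 1 - p` we have `L p = F p / √(pq)` for a rational function `F` (`L.rationalFactor`).
On `(0, 1/2]` the denominator `√(pq)` is positive and increasing, so it suffices that `F` is
positive and strictly decreasing there. In fact `F` decreases on all of `(0, ∞)`:
`F' = -N / (500 p² (1 - 2pq)³)`, where the sextic `N` (`L.derivNumer`) is positive on the whole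
real line (its minimum is about `55`, near `p ≈ 0.29`).
-/

/-- `L(p) = (1/((1−2pq)√(pq))) (c₁/p + c₂ + c₃ (1−2p)(1+2pq)/(1−2pq))` with
`q = 1 − p`, `c₁ = 0.516`, `c₂ = 0.121`, `c₃ = 0.271`. -/
noncomputable def L (p : ℝ) : ℝ :=
  (1 / ((1 - 2 * p * (1 - p)) * Real.sqrt (p * (1 - p)))) *
    (0.516 / p + 0.121 +
      0.271 * ((1 - 2 * p) * (1 + 2 * p * (1 - p)) / (1 - 2 * p * (1 - p))))

open Set

theorem StrictAntiOn.div_of_monotoneOn {α 𝕜 : Type*} [Preorder α] [Field 𝕜] [LinearOrder 𝕜]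
    [IsStrictOrderedRing 𝕜] {f g : α → 𝕜} {s : Set α} (hf : StrictAntiOn f s)
    (hg : MonotoneOn g s) (hf₀ : ∀ x ∈ s, 0 ≤ f x) (hg₀ : ∀ x ∈ s, 0 < g x) :
    StrictAntiOn (fun x ↦ f x / g x) s := fun a ha b hb hab ↦
  calc f b / g b < f a / g b := div_lt_div_of_pos_right (hf ha hb hab) (hg₀ b hb)
    _ ≤ f a / g a := div_le_div_of_nonneg_left (hf₀ a ha) (hg₀ a ha) (hg ha hb hab.le)

lemma monotoneOn_sqrt_mul_one_sub : MonotoneOn (fun p : ℝ ↦ √(p * (1 - p))) (Iic (1 / 2)) :=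
  fun a _ b hb hab ↦ Real.sqrt_le_sqrt (by rw [mem_Iic] at hb; nlinarith)

lemma one_sub_two_mul_mul_one_sub_pos (p : ℝ) : 0 < 1 - 2 * p * (1 - p) := by
  nlinarith [sq_nonneg (2 * p - 1)]

namespace L

noncomputable def rationalFactor (p : ℝ) : ℝ :=
  (0.516 / p + 0.121 + 0.271 * ((1 - 2 * p) * (1 + 2 * p * (1 - p)) / (1 - 2 * p * (1 - p)))) /
    (1 - 2 * p * (1 - p))

lemma eq_rationalFactor_div_sqrt (p : ℝ) : L p = rationalFactor p / √(p * (1 - p)) := by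
  rw [L, rationalFactor, one_div_mul_eq_div, div_div]

lemma rationalFactor_pos {p : ℝ} (hp₀ : 0 < p) (hp : p ≤ 1 / 2) : 0 < rationalFactor p := by
  have hw := one_sub_two_mul_mul_one_sub_pos p
  have : 0 ≤ (1 - 2 * p) * (1 + 2 * p * (1 - p)) / (1 - 2 * p * (1 - p)) :=
    div_nonneg (mul_nonneg (by linarith) (by nlinarith)) hw.le
  unfold rationalFactor
  positivity

def derivNumer (p : ℝ) : ℝ :=
  258 - 1548 * p + 3465 * p ^ 2 - 1966 * p ^ 3 + 744 * p ^ 4 - 1684 * p ^ 5 + 1084 * p ^ 6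

lemma derivNumer_pos (p : ℝ) : 0 < derivNumer p := by
  unfold derivNumer
  nlinarith [sq_nonneg (p ^ 3 - p ^ 2), sq_nonneg (p ^ 2 - p), sq_nonneg (p - 3 / 10)]

lemma hasDerivAt_rationalFactor {p : ℝ} (hp : p ≠ 0) :
    HasDerivAt rationalFactor (-derivNumer p / (500 * p ^ 2 * (1 - 2 * p * (1 - p)) ^ 3)) p := by
  have hw := (one_sub_two_mul_mul_one_sub_pos p).ne'
  have hq : HasDerivAt (fun x : ℝ ↦ x * (1 - x)) (1 - 2 * p) p :=
    ((hasDerivAt_id' p).fun_mul ((hasDerivAt_id' p).const_sub 1)).congr_deriv (by ring)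
  have hw' : HasDerivAt (fun x : ℝ ↦ 1 - 2 * x * (1 - x)) (-(2 * (1 - 2 * p))) p := by
    simpa only [mul_assoc] using (hq.const_mul 2).const_sub 1
  have hv' : HasDerivAt (fun x : ℝ ↦ 1 + 2 * x * (1 - x)) (2 * (1 - 2 * p)) p := by
    simpa only [mul_assoc] using (hq.const_mul 2).const_add 1
  have hu' := ((hasDerivAt_id' p).const_mul 2).const_sub 1
  have h := ((((hasDerivAt_inv hp).const_mul 0.516).add_const 0.121).fun_add
    (((hu'.fun_mul hv').fun_div hw' hw).const_mul 0.271)).fun_div hw' hw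
  refine h.congr_deriv ?_
  set w := 1 - 2 * p * (1 - p) with hw_def
  field_simp
  rw [hw_def, derivNumer]
  ring

lemma rationalFactor_strictAntiOn : StrictAntiOn rationalFactor (Ioi 0) := by
  have hderiv (p : ℝ) (hp : p ∈ Ioi 0) := hasDerivAt_rationalFactor (ne_of_gt hp)
  refine strictAntiOn_of_deriv_neg (convex_Ioi 0)
    (fun p hp ↦ (hderiv p hp).continuousAt.continuousWithinAt) fun p hp ↦ ?_
  rw [interior_Ioi] at hp
  rw [(hderiv p hp).deriv]
  have := one_sub_two_mul_mul_one_sub_pos p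
  rw [mem_Ioi] at hp
  exact div_neg_of_neg_of_pos (neg_neg_of_pos (derivNumer_pos p)) (by positivity)

end L

open L in
/-- The function `L(p)` is strictly decreasing on the interval `(0, 0.5]`. -/
theorem L_strictAntiOn : StrictAntiOn L (Set.Ioc (0 : ℝ) 0.5) := by
  have hhalf : (0.5 : ℝ) = 1 / 2 := by norm_num
  rw [hhalf, funext eq_rationalFactor_div_sqrt]
  refine (rationalFactor_strictAntiOn.mono Ioc_subset_Ioi_self).div_of_monotoneOn
    (monotoneOn_sqrt_mul_one_sub.mono Ioc_subset_Iic_self)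
    (fun p hp ↦ (rationalFactor_pos hp.1 hp.2).le) fun p hp ↦ Real.sqrt_pos.2 ?_
  exact mul_pos hp.1 (by linarith [hp.2])
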